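/- Let n ≥ 2, k ≥ 1, R ∈ (-1,1), and let ψ be a maximal solution of ψ'(r) = -(1/(k(1-r²)))(ψ(r)²+1)(√(1-r²)ψ(r)² - (n-1)(r-R)ψ(r) + √(1-r²)). Suppose there exists r₀ in the domain with r₀ ∈ (-1,b] and ψ(r₀) > 0, or with r₀ ∈ (b,1) and ψ(r₀) > η₂(r₀). Then there exists r₁ ∈ (-1,r₀) such that ψ(r) → +∞ as r ↓ r₁. -/

import Mathlib

noncomputable def Bq (n : ℕ) (R r : ℝ) : ℝ :=
  (((n : ℝ) - 1) ^ 2 + 4) * r ^ 2 - 2 * ((n : ℝ) - 1) ^ 2 * R * r + ((n : ℝ) - 1) ^ 2 * R ^ 2 - 4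

noncomputable def rootA (n : ℕ) (R : ℝ) : ℝ :=
  (((n : ℝ) - 1) ^ 2 * R - 2 * Real.sqrt (((n : ℝ) - 1) ^ 2 * (1 - R ^ 2) + 4)) / (((n : ℝ) - 1) ^ 2 + 4)

noncomputable def rootB (n : ℕ) (R : ℝ) : ℝ :=
  (((n : ℝ) - 1) ^ 2 * R + 2 * Real.sqrt (((n : ℝ) - 1) ^ 2 * (1 - R ^ 2) + 4)) / (((n : ℝ) - 1) ^ 2 + 4)

noncomputable def Aq (n : ℕ) (R x r : ℝ) : ℝ :=
  Real.sqrt (1 - r ^ 2) * x ^ 2 - ((n : ℝ) - 1) * (r - R) * x + Real.sqrt (1 - r ^ 2)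

noncomputable def eta1 (n : ℕ) (R r : ℝ) : ℝ :=
  (((n : ℝ) - 1) * (r - R) - Real.sqrt (Bq n R r)) / (2 * Real.sqrt (1 - r ^ 2))

noncomputable def eta2 (n : ℕ) (R r : ℝ) : ℝ :=
  (((n : ℝ) - 1) * (r - R) + Real.sqrt (Bq n R r)) / (2 * Real.sqrt (1 - r ^ 2))

noncomputable def Phi (n k : ℕ) (R r p : ℝ) : ℝ :=
  -(1 / ((k : ℝ) * (1 - r ^ 2))) * (p ^ 2 + 1) *
    (Real.sqrt (1 - r ^ 2) * p ^ 2 - ((n : ℝ) - 1) * (r - R) * p + Real.sqrt (1 - r ^ 2))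

/-!
Write `b = rootB n R` and let the threshold be `0` on `(-1, b]` and `η₂` on `(b, 1)`. Above the
threshold the right-hand side `Phi` is nonpositive, and the threshold is nondecreasing, so the
region above it is invariant as `r` decreases: `ψ` is positive and nonincreasing on `(x, r₀]`.
The left end `x` of the maximal interval is not `-1`, because near `-1` we have
`ψ' ≤ -κ ψ² / (r + 1)`, and integrating `(1 / ψ)' ≥ κ / (r + 1)` would make `1 / ψ` negative.
If `ψ` stayed bounded near `x`, its monotone limit `L` would be finite, the equation is `C¹` at
`(x, L)`, and Picard–Lindelöf would continue `ψ` past `x`, contradicting maximality. Hence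
`ψ → +∞` as `r ↓ x`.
-/

open Set Filter Topology

theorem antitoneOn_of_hasDerivAt_nonpos {ψ ψ' : ℝ → ℝ} {D : Set ℝ} (hD : Convex ℝ D)
    (hψ : ∀ r ∈ D, HasDerivAt ψ (ψ' r) r) (hψ' : ∀ r ∈ interior D, ψ' r ≤ 0) :
    AntitoneOn ψ D :=
  antitoneOn_of_hasDerivWithinAt_nonpos hD
    (fun r hr => (hψ r hr).continuousAt.continuousWithinAt)
    (fun r hr => (hψ r (interior_subset hr)).hasDerivWithinAt) hψ'

theorem forall_lt_of_hasDerivAt_nonpos_of_lt {ψ ψ' h : ℝ → ℝ} {a r₀ : ℝ}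
    (hh : MonotoneOn h (Ioc a r₀)) (hψ : ∀ r ∈ Ioc a r₀, HasDerivAt ψ (ψ' r) r)
    (hψ' : ∀ r ∈ Ioo a r₀, h r < ψ r → ψ' r ≤ 0) (hr₀ : h r₀ < ψ r₀) :
    ∀ r ∈ Ioc a r₀, h r < ψ r := by
  by_contra! hbad
  obtain ⟨r₁, hr₁, hψr₁⟩ := hbad
  have hsub : Icc r₁ r₀ ⊆ Ioc a r₀ := Icc_subset_Ioc_iff hr₁.2 |>.2 ⟨hr₁.1, le_rfl⟩
  set S := {r ∈ Icc r₁ r₀ | ψ r ≤ h r}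
  have hSne : S.Nonempty := ⟨r₁, ⟨le_rfl, hr₁.2⟩, hψr₁⟩
  have hSbdd : BddAbove S := ⟨r₀, fun r hr => hr.1.2⟩
  set s := sSup S
  have hs : s ∈ Icc r₁ r₀ :=
    ⟨le_csSup hSbdd ⟨⟨le_rfl, hr₁.2⟩, hψr₁⟩, csSup_le hSne fun r hr => hr.1.2⟩
  -- Monotonicity of `h` makes `{ψ ≤ h s}` a closed set containing `S`.
  have hψs : ψ s ≤ h s := by
    have hT : IsClosed (Icc r₁ r₀ ∩ ψ ⁻¹' Iic (h s)) :=
      ContinuousOn.preimage_isClosed_of_isClosed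
        (fun r hr => (hψ r (hsub hr)).continuousAt.continuousWithinAt) isClosed_Icc isClosed_Iic
    have hST : S ⊆ Icc r₁ r₀ ∩ ψ ⁻¹' Iic (h s) := fun r hr =>
      ⟨hr.1, hr.2.trans (hh (hsub hr.1) (hsub hs) (le_csSup hSbdd hr))⟩
    exact (closure_minimal hST hT (csSup_mem_closure hSne hSbdd)).2
  have hsr₀ : s < r₀ := hs.2.lt_of_ne fun h_eq => (h_eq ▸ hψs).not_gt hr₀
  have hanti : AntitoneOn ψ (Icc s r₀) := by
    refine antitoneOn_of_hasDerivAt_nonpos (convex_Icc s r₀)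
      (fun r hr => hψ r (hsub ⟨hs.1.trans hr.1, hr.2⟩)) ?_
    rw [interior_Icc]
    intro r hr
    refine hψ' r ⟨hr₁.1.trans_le (hs.1.trans hr.1.le), hr.2⟩ (not_le.1 fun hle => ?_)
    exact hr.1.not_ge (le_csSup hSbdd ⟨⟨hs.1.trans hr.1.le, hr.2.le⟩, hle⟩)
  have := hanti ⟨le_rfl, hsr₀.le⟩ ⟨hsr₀.le, le_rfl⟩ hsr₀.le
  have := hh (hsub hs) (hsub ⟨hs.1.trans hsr₀.le, le_rfl⟩) hsr₀.le
  linarith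

theorem exists_nonpos_of_hasDerivAt_le_neg_mul_sq_div {ψ ψ' : ℝ → ℝ} {a u κ : ℝ} (hκ : 0 < κ)
    (hau : a < u) (hψ : ∀ r ∈ Ioc a u, HasDerivAt ψ (ψ' r) r)
    (hψ' : ∀ r ∈ Ioo a u, ψ' r ≤ -(κ * ψ r ^ 2 / (r - a))) :
    ∃ r ∈ Ioc a u, ψ r ≤ 0 := by
  by_contra! hpos
  -- `1 / ψ - κ log (r - a)` is nondecreasing, so `1 / ψ` would become negative near `a`.
  set E := fun r => (ψ r)⁻¹ - κ * Real.log (r - a)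
  have hE : ∀ r ∈ Ioc a u, HasDerivAt E (-ψ' r / ψ r ^ 2 - κ * (1 / (r - a))) r := by
    intro r hr
    have hra : r - a ≠ 0 := (sub_pos.2 hr.1).ne'
    exact ((hψ r hr).inv (hpos r hr).ne').sub
      ((((hasDerivAt_id r).sub_const a).log hra).const_mul κ |>.congr_deriv (by simp))
  have hmono : MonotoneOn E (Ioc a u) := by
    refine monotoneOn_of_hasDerivWithinAt_nonneg (convex_Ioc a u)
      (fun r hr => (hE r hr).continuousAt.continuousWithinAt)
      (fun r hr => (hE r (interior_subset hr)).hasDerivWithinAt) ?_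
    rw [interior_Ioc]
    intro r hr
    have hψr := hpos r ⟨hr.1, hr.2.le⟩
    have hra : 0 < r - a := sub_pos.2 hr.1
    rw [sub_nonneg, mul_one_div, le_div_iff₀ (by positivity), div_mul_eq_mul_div]
    linarith [hψ' r hr]
  have hlog : Tendsto (fun r => E u + κ * Real.log (r - a)) (𝓝[>] a) atBot := by
    refine tendsto_atBot_add_const_left _ _ (Tendsto.const_mul_atBot hκ ?_)
    refine Real.tendsto_log_nhdsGT_zero.comp ?_
    refine tendsto_nhdsWithin_iff.2 ⟨?_, ?_⟩
    · simpa using ((continuous_sub_right a).tendsto a).mono_left nhdsWithin_le_nhds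
    · filter_upwards [self_mem_nhdsWithin] with r hr using sub_pos.2 (mem_Ioi.1 hr)
  obtain ⟨r, hneg, hr⟩ := ((hlog.eventually_lt_atBot 0).and (Ioc_mem_nhdsGT hau)).exists
  have hEr : (ψ r)⁻¹ - κ * Real.log (r - a) ≤ E u := hmono hr ⟨hau, le_rfl⟩ hr.2
  linarith [inv_pos.2 (hpos r hr)]

theorem AntitoneOn.tendsto_nhdsGT_atTop {α β : Type*} [LinearOrder α] [TopologicalSpace α]
    [OrderTopology α] [LinearOrder β] {ψ : α → β} {a b : α} (hψ : AntitoneOn ψ (Ioo a b))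
    (hub : ¬ BddAbove (ψ '' Ioo a b)) : Tendsto ψ (𝓝[>] a) atTop := by
  refine tendsto_atTop.2 fun M => ?_
  obtain ⟨_, ⟨r, hr, rfl⟩, hMr⟩ := not_bddAbove_iff.1 hub M
  filter_upwards [Ioo_mem_nhdsGT hr.1] with s hs
  exact hMr.le.trans (hψ ⟨hs.1, hs.2.trans hr.2⟩ hr hs.2.le)

section ODE

variable {E : Type*} [NormedAddCommGroup E] [NormedSpace ℝ E]

theorem exists_hasDerivAt_of_contDiffAt [CompleteSpace E] {f : ℝ → E → E} {t₀ : ℝ} {x₀ : E}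
    (hf : ContDiffAt ℝ 1 (fun q : ℝ × E => f q.1 q.2) (t₀, x₀)) :
    ∃ φ : ℝ → E, φ t₀ = x₀ ∧ ∃ ε > 0, ∀ t ∈ Ioo (t₀ - ε) (t₀ + ε), HasDerivAt φ (f t (φ t)) t := by
  -- Solve the autonomous system `(s, x)' = (1, f s x)` in `ℝ × E`; its first component is time.
  obtain ⟨α, hα₀, ε, hε, hα⟩ :=
    (contDiffAt_const.prodMk hf : ContDiffAt ℝ 1 (fun q : ℝ × E => ((1 : ℝ), f q.1 q.2)) (t₀, x₀))
      |>.exists_forall_mem_closedBall_exists_eq_forall_mem_Ioo_hasDerivAt₀ t₀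
  have hfst : ∀ t ∈ Ioo (t₀ - ε) (t₀ + ε), HasDerivAt (fun s => (α s).1) 1 t := fun t ht =>
    (hasFDerivAt_fst.comp_hasDerivAt t (hα t ht) :)
  have hsnd : ∀ t ∈ Ioo (t₀ - ε) (t₀ + ε), HasDerivAt (fun s => (α s).2) (f (α t).1 (α t).2) t :=
    fun t ht => (hasFDerivAt_snd.comp_hasDerivAt t (hα t ht) :)
  have htime : EqOn (fun s => (α s).1) id (Ioo (t₀ - ε) (t₀ + ε)) :=
    isOpen_Ioo.eqOn_of_deriv_eq isPreconnected_Ioo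
      (fun t ht => (hfst t ht).differentiableAt.differentiableWithinAt)
      differentiableOn_id
      (fun t ht => by simp only [(hfst t ht).deriv, deriv_id])
      (x := t₀) ⟨by linarith, by linarith⟩ (by simp [hα₀])
  refine ⟨fun s => (α s).2, by simp [hα₀], ε, hε, fun t ht => ?_⟩
  simpa [htime ht] using hsnd t ht

theorem hasDerivAt_ite_of_tendsto {φ ψ ψ' : ℝ → E} {a b : ℝ} {e : E} (hab : a < b)
    (hφ : HasDerivAt φ e a) (hψ : ∀ r ∈ Ioo a b, HasDerivAt ψ (ψ' r) r)
    (hlim : Tendsto ψ (𝓝[>] a) (𝓝 (φ a))) (hlim' : Tendsto ψ' (𝓝[>] a) (𝓝 e)) :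
    HasDerivAt (fun r => if a < r then ψ r else φ r) e a := by
  set g := fun r => if a < r then ψ r else φ r
  have hgψ : ∀ r ∈ Ioo a b, g =ᶠ[𝓝 r] ψ := fun r hr =>
    eventually_of_mem (isOpen_Ioi.mem_nhds hr.1) fun s hs => if_pos hs
  have hleft : HasDerivWithinAt g e (Iic a) a :=
    hφ.hasDerivWithinAt.congr (fun r hr => if_neg hr.not_gt) (if_neg (lt_irrefl a))
  have hright : HasDerivWithinAt g e (Ici a) a := by
    refine hasDerivWithinAt_Ici_of_tendsto_deriv (s := Ioo a b)
      (fun r hr =>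
        ((hψ r hr).congr_of_eventuallyEq (hgψ r hr)).differentiableAt.differentiableWithinAt)
      ?_ (Ioo_mem_nhdsGT hab) ?_
    · rw [ContinuousWithinAt, show g a = φ a from if_neg (lt_irrefl a)]
      refine (hlim.mono_left (nhdsWithin_mono a Ioo_subset_Ioi_self)).congr' ?_
      filter_upwards [self_mem_nhdsWithin] with r hr
      exact (if_pos hr.1).symm
    · refine hlim'.congr' ?_
      filter_upwards [Ioo_mem_nhdsGT hab] with r hr
      exact ((hψ r hr).congr_of_eventuallyEq (hgψ r hr)).deriv.symm
  simpa [Iic_union_Ici] using hleft.union hright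

theorem exists_hasDerivAt_extension_left [CompleteSpace E] {f : ℝ → E → E} {ψ : ℝ → E}
    {x y : ℝ} {L : E} (hf : ContDiffAt ℝ 1 (fun q : ℝ × E => f q.1 q.2) (x, L))
    (hψ : ∀ r ∈ Ioo x y, HasDerivAt ψ (f r (ψ r)) r) (hlim : Tendsto ψ (𝓝[>] x) (𝓝 L)) :
    ∃ x' < x, ∃ g : ℝ → E, EqOn g ψ (Ioo x y) ∧ ∀ r ∈ Ioo x' y, HasDerivAt g (f r (g r)) r := by
  obtain ⟨φ, hφx, ε, hε, hφ⟩ := exists_hasDerivAt_of_contDiffAt hf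
  set g := fun r => if x < r then ψ r else φ r
  refine ⟨x - ε, by linarith, g, fun r hr => if_pos hr.1, fun r hr => ?_⟩
  rcases lt_trichotomy r x with hrx | rfl | hxr
  · have hφr := hφ r ⟨hr.1, by linarith⟩
    have hgφ : g =ᶠ[𝓝 r] φ :=
      eventually_of_mem (isOpen_Iio.mem_nhds hrx) fun s hs => if_neg (not_lt.2 (le_of_lt hs))
    rw [hgφ.eq_of_nhds]
    exact hφr.congr_of_eventuallyEq hgφ
  · have hφr := hφ r ⟨by linarith, by linarith⟩
    rw [show g r = L from (if_neg (lt_irrefl r)).trans hφx]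
    rw [hφx] at hφr
    refine hasDerivAt_ite_of_tendsto hr.2 hφr hψ (hφx ▸ hlim) ?_
    exact hf.continuousAt.tendsto.comp
      ((tendsto_nhdsWithin_of_tendsto_nhds tendsto_id).prodMk_nhds hlim)
  · have hgψ : g =ᶠ[𝓝 r] ψ := eventually_of_mem (isOpen_Ioi.mem_nhds hxr) fun s hs => if_pos hs
    rw [hgψ.eq_of_nhds]
    exact (hψ r ⟨hxr, hr.2⟩).congr_of_eventuallyEq hgψ

end ODE

section Algebra

variable {n : ℕ} {R r p : ℝ}

theorem one_le_natCast_sub_one (hn : 2 ≤ n) : (1 : ℝ) ≤ n - 1 := by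
  have : (2 : ℝ) ≤ n := by exact_mod_cast hn
  linarith

theorem Bq_eq_mul (hR1 : -1 < R) (hR2 : R < 1) (r : ℝ) :
    Bq n R r = (((n : ℝ) - 1) ^ 2 + 4) * (r - rootA n R) * (r - rootB n R) := by
  have hD := Real.sq_sqrt (by
    nlinarith [mul_nonneg (sq_nonneg ((n : ℝ) - 1)) (by nlinarith : (0 : ℝ) ≤ 1 - R ^ 2)] :
      (0 : ℝ) ≤ ((n : ℝ) - 1) ^ 2 * (1 - R ^ 2) + 4)
  have hC : ((n : ℝ) - 1) ^ 2 + 4 ≠ 0 := by positivity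
  rw [Bq, rootA, rootB]
  field_simp
  linear_combination 4 * hD

theorem two_mul_abs_lt_sqrt (hR1 : -1 < R) (hR2 : R < 1) :
    2 * |R| < Real.sqrt (((n : ℝ) - 1) ^ 2 * (1 - R ^ 2) + 4) := by
  rw [← Real.sqrt_sq (by positivity : 0 ≤ 2 * |R|)]
  apply Real.sqrt_lt_sqrt (by positivity)
  nlinarith [sq_abs R, mul_nonneg (sq_nonneg ((n : ℝ) - 1)) (by nlinarith : (0 : ℝ) ≤ 1 - R ^ 2)]

theorem rootA_lt (hR1 : -1 < R) (hR2 : R < 1) : rootA n R < R := by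
  have := two_mul_abs_lt_sqrt (n := n) hR1 hR2
  rw [rootA, div_lt_iff₀ (by positivity)]
  nlinarith [neg_abs_le R]

theorem lt_rootB (hR1 : -1 < R) (hR2 : R < 1) : R < rootB n R := by
  have := two_mul_abs_lt_sqrt (n := n) hR1 hR2
  rw [rootB, lt_div_iff₀ (by positivity)]
  nlinarith [le_abs_self R]

theorem Bq_nonpos (hR1 : -1 < R) (hR2 : R < 1) (hRr : R ≤ r) (hrb : r ≤ rootB n R) :
    Bq n R r ≤ 0 := by
  rw [Bq_eq_mul hR1 hR2]
  have := rootA_lt (n := n) hR1 hR2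
  exact mul_nonpos_of_nonneg_of_nonpos (by nlinarith) (by linarith)

theorem Bq_nonneg (hR1 : -1 < R) (hR2 : R < 1) (hbr : rootB n R ≤ r) : 0 ≤ Bq n R r := by
  rw [Bq_eq_mul hR1 hR2]
  have := rootA_lt (n := n) hR1 hR2
  have := lt_rootB (n := n) hR1 hR2
  exact mul_nonneg (mul_nonneg (by positivity) (by linarith)) (by linarith)

theorem four_mul_sqrt_mul_Aq (hr : r ^ 2 ≤ 1) :
    4 * Real.sqrt (1 - r ^ 2) * Aq n R p r =
      (2 * Real.sqrt (1 - r ^ 2) * p - ((n : ℝ) - 1) * (r - R)) ^ 2 - Bq n R r := by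
  have := Real.sq_sqrt (sub_nonneg.2 hr)
  rw [Aq, Bq]
  linear_combination 4 * this

theorem mul_sub_mul_le_Aq : ((n : ℝ) - 1) * (R - r) * p ≤ Aq n R p r := by
  rw [Aq]
  nlinarith [Real.sqrt_nonneg (1 - r ^ 2), mul_nonneg (Real.sqrt_nonneg (1 - r ^ 2)) (sq_nonneg p)]

theorem Aq_nonneg_of_le_rootB (hn : 2 ≤ n) (hR1 : -1 < R) (hR2 : R < 1) (hr : r < 1)
    (hrb : r ≤ rootB n R) (hp : 0 ≤ p) : 0 ≤ Aq n R p r := by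
  rcases le_or_gt r R with hrR | hRr
  · have := one_le_natCast_sub_one hn
    have : 0 ≤ ((n : ℝ) - 1) * (R - r) * p := by positivity
    exact this.trans mul_sub_mul_le_Aq
  · have hr2 : r ^ 2 < 1 := by nlinarith
    have hS : 0 < Real.sqrt (1 - r ^ 2) := Real.sqrt_pos.2 (by linarith)
    have h4 := four_mul_sqrt_mul_Aq (n := n) (R := R) (p := p) hr2.le
    have := Bq_nonpos hR1 hR2 hRr.le hrb
    nlinarith [sq_nonneg (2 * Real.sqrt (1 - r ^ 2) * p - ((n : ℝ) - 1) * (r - R))]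

theorem two_mul_sqrt_mul_eta2 (hr : r ^ 2 < 1) :
    2 * Real.sqrt (1 - r ^ 2) * eta2 n R r = ((n : ℝ) - 1) * (r - R) + Real.sqrt (Bq n R r) := by
  have : 0 < Real.sqrt (1 - r ^ 2) := Real.sqrt_pos.2 (by linarith)
  rw [eta2]
  field_simp

theorem Aq_pos_of_eta2_lt (hR1 : -1 < R) (hR2 : R < 1) (hbr : rootB n R ≤ r) (hr : r < 1)
    (hp : eta2 n R r < p) : 0 < Aq n R p r := by
  have hRr := (lt_rootB (n := n) hR1 hR2).trans_le hbr
  have hr2 : r ^ 2 < 1 := by nlinarith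
  have hS : 0 < Real.sqrt (1 - r ^ 2) := Real.sqrt_pos.2 (by linarith)
  have hB := Real.sq_sqrt (Bq_nonneg (n := n) hR1 hR2 hbr)
  have hη := two_mul_sqrt_mul_eta2 (n := n) (R := R) hr2
  have hgap : Real.sqrt (Bq n R r) < 2 * Real.sqrt (1 - r ^ 2) * p - ((n : ℝ) - 1) * (r - R) := by
    nlinarith [mul_lt_mul_of_pos_left hp (by positivity : (0 : ℝ) < 2 * Real.sqrt (1 - r ^ 2))]
  have h4 := four_mul_sqrt_mul_Aq (n := n) (R := R) (p := p) hr2.le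
  have : 0 < 4 * Real.sqrt (1 - r ^ 2) * Aq n R p r := by
    nlinarith [Real.sqrt_nonneg (Bq n R r)]
  exact pos_of_mul_pos_right this (by positivity)

theorem Aq_eta2 (hR1 : -1 < R) (hR2 : R < 1) (hbr : rootB n R ≤ r) (hr : r < 1) :
    Aq n R (eta2 n R r) r = 0 := by
  have hRr := (lt_rootB (n := n) hR1 hR2).trans_le hbr
  have hr2 : r ^ 2 < 1 := by nlinarith
  have hS : 0 < Real.sqrt (1 - r ^ 2) := Real.sqrt_pos.2 (by linarith)
  have hB := Real.sq_sqrt (Bq_nonneg (n := n) hR1 hR2 hbr)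
  have h4 := four_mul_sqrt_mul_Aq (n := n) (R := R) (p := eta2 n R r) hr2.le
  rw [two_mul_sqrt_mul_eta2 hr2, add_sub_cancel_left, hB, sub_self] at h4
  simpa [hS.ne'] using h4

theorem eta2_pos (hn : 2 ≤ n) (hR1 : -1 < R) (hRr : R < r) (hr : r < 1) : 0 < eta2 n R r := by
  have := one_le_natCast_sub_one hn
  have : 0 < Real.sqrt (1 - r ^ 2) := Real.sqrt_pos.2 (by nlinarith)
  have : 0 < ((n : ℝ) - 1) * (r - R) := by nlinarith
  rw [eta2]
  exact div_pos (by positivity) (by positivity)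

theorem sub_mul_sqrt_le_sub_mul_sqrt {u v : ℝ} (hR1 : -1 < R) (hRu : R ≤ u)
    (huv : u ≤ v) (hv : v < 1) :
    (u - R) * Real.sqrt (1 - v ^ 2) ≤ (v - R) * Real.sqrt (1 - u ^ 2) := by
  have hRv : 0 < 1 - R * v := by nlinarith
  have hRu' : 0 < 1 - R * u := by nlinarith
  have hsq : (u - R) ^ 2 * (1 - v ^ 2) ≤ (v - R) ^ 2 * (1 - u ^ 2) := by
    have key : (v - R) ^ 2 * (1 - u ^ 2) - (u - R) ^ 2 * (1 - v ^ 2)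
        = (v - u) * ((u - R) * (1 - R * v) + (v - R) * (1 - R * u)) := by ring
    have : 0 ≤ (v - u) * ((u - R) * (1 - R * v) + (v - R) * (1 - R * u)) :=
      mul_nonneg (by linarith) (add_nonneg (mul_nonneg (by linarith) hRv.le)
        (mul_nonneg (by linarith) hRu'.le))
    linarith
  rw [← Real.sqrt_sq (by linarith : 0 ≤ u - R), ← Real.sqrt_sq (by linarith : 0 ≤ v - R),
    ← Real.sqrt_mul (sq_nonneg _), ← Real.sqrt_mul (sq_nonneg _)]
  exact Real.sqrt_le_sqrt hsq

theorem eta2_monotoneOn (hn : 2 ≤ n) (hR1 : -1 < R) (hR2 : R < 1) :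
    MonotoneOn (eta2 n R) (Ico (rootB n R) 1) := by
  intro u hu v hv huv
  by_contra! hlt
  have hRu := (lt_rootB (n := n) hR1 hR2).trans_le hu.1
  set e := eta2 n R u
  have he : 0 < e := eta2_pos hn hR1 hRu hu.2
  have hAv : 0 < Aq n R e v := Aq_pos_of_eta2_lt hR1 hR2 hv.1 hv.2 hlt
  have hAu : Aq n R e u = 0 := Aq_eta2 hR1 hR2 hu.1 hu.2
  have hSu : 0 < Real.sqrt (1 - u ^ 2) := Real.sqrt_pos.2 (by nlinarith [hu.2])
  -- Dividing by `√(1 - r²)`, `Aq n R e r` is `e² + 1` minus `(n - 1) e` times the increasing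
  -- function `(r - R) / √(1 - r²)`; it vanishes at `u`, so it cannot be positive at `v ≥ u`.
  have hcomb : Aq n R e v * Real.sqrt (1 - u ^ 2) = ((n : ℝ) - 1) * e *
      ((u - R) * Real.sqrt (1 - v ^ 2) - (v - R) * Real.sqrt (1 - u ^ 2)) := by
    rw [Aq] at hAu ⊢
    linear_combination Real.sqrt (1 - v ^ 2) * hAu
  have hslope := sub_mul_sqrt_le_sub_mul_sqrt hR1 hRu.le huv hv.2
  have := one_le_natCast_sub_one hn
  nlinarith [mul_pos hAv hSu, mul_nonneg (mul_nonneg (by linarith : (0 : ℝ) ≤ (n : ℝ) - 1) he.le)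
    (sub_nonneg.2 hslope)]

end Algebra

noncomputable def blowUpThreshold (n : ℕ) (R r : ℝ) : ℝ :=
  if rootB n R < r then eta2 n R r else 0

section Threshold

variable {n k : ℕ} {R r p : ℝ}

theorem blowUpThreshold_nonneg (hn : 2 ≤ n) (hR1 : -1 < R) (hR2 : R < 1) (hr : r < 1) :
    0 ≤ blowUpThreshold n R r := by
  unfold blowUpThreshold
  split_ifs with hbr
  · exact (eta2_pos hn hR1 ((lt_rootB hR1 hR2).trans hbr) hr).le
  · exact le_rfl

theorem monotoneOn_blowUpThreshold (hn : 2 ≤ n) (hR1 : -1 < R) (hR2 : R < 1) :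
    MonotoneOn (blowUpThreshold n R) (Iio 1) := by
  intro u hu v hv huv
  by_cases hbu : rootB n R < u
  · have hbv := hbu.trans_le huv
    simp only [blowUpThreshold, if_pos hbu, if_pos hbv]
    exact eta2_monotoneOn hn hR1 hR2 ⟨hbu.le, hu⟩ ⟨hbv.le, hv⟩ huv
  · rw [blowUpThreshold, if_neg hbu]
    exact blowUpThreshold_nonneg hn hR1 hR2 hv

theorem Aq_nonneg_of_blowUpThreshold_lt (hn : 2 ≤ n) (hR1 : -1 < R) (hR2 : R < 1) (hr : r < 1)
    (hp : blowUpThreshold n R r < p) : 0 ≤ Aq n R p r := by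
  unfold blowUpThreshold at hp
  split_ifs at hp with hbr
  · exact (Aq_pos_of_eta2_lt hR1 hR2 hbr.le hr hp).le
  · exact Aq_nonneg_of_le_rootB hn hR1 hR2 hr (not_lt.1 hbr) hp.le

theorem Phi_nonpos (hr1 : -1 < r) (hr2 : r < 1) (hA : 0 ≤ Aq n R p r) : Phi n k R r p ≤ 0 := by
  have : 0 < 1 - r ^ 2 := by nlinarith
  have : 0 ≤ 1 / ((k : ℝ) * (1 - r ^ 2)) * (p ^ 2 + 1) * Aq n R p r := by positivity
  rw [Phi, neg_mul, neg_mul]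
  exact neg_nonpos.2 (by simpa [Aq] using this)

theorem Phi_le_neg_mul_sq_div (hn : 2 ≤ n) (hk : 1 ≤ k) (hR1 : -1 < R) (hR2 : R < 1) {c : ℝ}
    (hr : -1 < r) (hrR : r ≤ (R - 1) / 2) (hc : 0 < c) (hcp : c ≤ p) :
    Phi n k R r p ≤ -(((n : ℝ) - 1) * (R + 1) * c / (4 * k) * p ^ 2 / (r - -1)) := by
  have hn' := one_le_natCast_sub_one hn
  have hk' : (0 : ℝ) < k := by positivity
  have hr1 : 0 < r + 1 := by linarith
  have hD : 0 < (k : ℝ) * (1 - r ^ 2) := mul_pos hk' (by nlinarith)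
  have hK : 0 < ((n : ℝ) - 1) * (R + 1) * c := mul_pos (mul_pos (by linarith) (by linarith)) hc
  have hA : ((n : ℝ) - 1) * (R + 1) * c / 2 ≤ Aq n R p r := by
    have : ((n : ℝ) - 1) * ((R + 1) / 2) * c ≤ ((n : ℝ) - 1) * (R - r) * p :=
      mul_le_mul (mul_le_mul_of_nonneg_left (by linarith) (by linarith)) hcp hc.le
        (by nlinarith)
    linarith [mul_sub_mul_le_Aq (n := n) (R := R) (r := r) (p := p)]
  have hPhi : Phi n k R r p = -((p ^ 2 + 1) * Aq n R p r / ((k : ℝ) * (1 - r ^ 2))) := by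
    rw [Phi, Aq]; ring
  rw [hPhi, neg_le_neg_iff, sub_neg_eq_add, div_le_div_iff₀ hr1 hD]
  calc ((n : ℝ) - 1) * (R + 1) * c / (4 * k) * p ^ 2 * (k * (1 - r ^ 2))
      = ((n : ℝ) - 1) * (R + 1) * c / 2 * p ^ 2 * ((1 - r) / 2) * (r + 1) := by
        field_simp; ring
    _ ≤ Aq n R p r * p ^ 2 * 1 * (r + 1) := by
        have : 0 ≤ Aq n R p r := by linarith
        gcongr <;> linarith
    _ ≤ (p ^ 2 + 1) * Aq n R p r * (r + 1) := by
        have : 0 ≤ Aq n R p r := by linarith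
        nlinarith

theorem contDiffAt_Phi (hk : 1 ≤ k) (hr1 : -1 < r) (hr2 : r < 1) (p : ℝ) :
    ContDiffAt ℝ 1 (fun q : ℝ × ℝ => Phi n k R q.1 q.2) (r, p) := by
  have h1 : (1 : ℝ) - r ^ 2 ≠ 0 := by nlinarith
  have hk' : (k : ℝ) ≠ 0 := by positivity
  unfold Phi
  fun_prop (disch := simp [h1, hk'])

theorem antitoneOn_of_blowUpThreshold_lt (hn : 2 ≤ n) (hR1 : -1 < R) (hR2 : R < 1)
    {ψ : ℝ → ℝ} {x r₀ : ℝ} (hx : -1 ≤ x) (hr₀ : r₀ < 1)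
    (hψ : ∀ r ∈ Ioc x r₀, HasDerivAt ψ (Phi n k R r (ψ r)) r)
    (hψr₀ : blowUpThreshold n R r₀ < ψ r₀) : AntitoneOn ψ (Ioc x r₀) := by
  have hdecr : ∀ r ∈ Ioo x r₀, blowUpThreshold n R r < ψ r → Phi n k R r (ψ r) ≤ 0 :=
    fun r hr h => Phi_nonpos (hx.trans_lt hr.1) (hr.2.trans hr₀)
      (Aq_nonneg_of_blowUpThreshold_lt hn hR1 hR2 (hr.2.trans hr₀) h)
  have habove : ∀ r ∈ Ioc x r₀, blowUpThreshold n R r < ψ r :=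
    forall_lt_of_hasDerivAt_nonpos_of_lt
      ((monotoneOn_blowUpThreshold hn hR1 hR2).mono fun r hr => hr.2.trans_lt hr₀) hψ hdecr hψr₀
  refine antitoneOn_of_hasDerivAt_nonpos (convex_Ioc x r₀) hψ ?_
  rw [interior_Ioc]
  exact fun r hr => hdecr r hr (habove r (Ioo_subset_Ioc_self hr))

theorem apply_nonpos_of_antitoneOn_Ioc_neg_one (hn : 2 ≤ n) (hk : 1 ≤ k) (hR1 : -1 < R)
    (hR2 : R < 1) {ψ : ℝ → ℝ} {r₀ : ℝ} (hr₀ : -1 < r₀)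
    (hψ : ∀ r ∈ Ioc (-1) r₀, HasDerivAt ψ (Phi n k R r (ψ r)) r)
    (hanti : AntitoneOn ψ (Ioc (-1) r₀)) : ψ r₀ ≤ 0 := by
  by_contra! hpos
  have hψge : ∀ r ∈ Ioc (-1) r₀, ψ r₀ ≤ ψ r := fun r hr => hanti hr ⟨hr₀, le_rfl⟩ hr.2
  -- Near `-1`, `ψ' ≤ -κ ψ² / (r + 1)`, which forces `ψ` to reach `0` before `-1`.
  have hκ : 0 < ((n : ℝ) - 1) * (R + 1) * ψ r₀ / (4 * k) :=
    div_pos (mul_pos (mul_pos (by linarith [one_le_natCast_sub_one hn]) (by linarith)) hpos)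
      (by positivity)
  have hsub : Ioc (-1) (min ((R - 1) / 2) r₀) ⊆ Ioc (-1) r₀ :=
    Ioc_subset_Ioc_right (min_le_right _ _)
  obtain ⟨r, hr, hψr⟩ := exists_nonpos_of_hasDerivAt_le_neg_mul_sq_div hκ
    (lt_min (by linarith) hr₀) (fun r hr => hψ r (hsub hr)) fun r hr =>
      Phi_le_neg_mul_sq_div hn hk hR1 hR2 hr.1 (hr.2.le.trans (min_le_left _ _)) hpos
        (hψge r (hsub (Ioo_subset_Ioc_self hr)))
  exact (hpos.trans_le (hψge r (hsub hr))).not_ge hψr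

end Threshold

theorem stmt_8_general (n k : ℕ) (hn : 2 ≤ n) (hk : 1 ≤ k) (R : ℝ) (hR1 : -1 < R) (hR2 : R < 1)
    (x y : ℝ) (hx : -1 ≤ x) (hy : y ≤ 1) (ψ : ℝ → ℝ)
    (hode : ∀ r ∈ Set.Ioo x y, HasDerivAt ψ (Phi n k R r (ψ r)) r)
    (hmax : ∀ x' y' : ℝ, ∀ g : ℝ → ℝ, x' ≤ x → y ≤ y' → Set.Ioo x y ⊂ Set.Ioo x' y' →
      Set.EqOn g ψ (Set.Ioo x y) →
      ¬ (∀ r ∈ Set.Ioo x' y', HasDerivAt g (Phi n k R r (g r)) r))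
    (r₀ : ℝ) (hr₀ : r₀ ∈ Set.Ioo x y)
    (hcase : (r₀ ∈ Set.Ioc (-1 : ℝ) (rootB n R) ∧ 0 < ψ r₀) ∨
      (r₀ ∈ Set.Ioo (rootB n R) 1 ∧ eta2 n R r₀ < ψ r₀)) :
    ∃ r₁ ∈ Set.Ioo (-1 : ℝ) r₀,
      Filter.Tendsto ψ (nhdsWithin r₁ (Set.Ioi r₁)) Filter.atTop := by
  obtain ⟨hxr₀, hr₀y⟩ := hr₀
  have hr₀1 : r₀ < 1 := hr₀y.trans_le hy
  have hψ : ∀ r ∈ Ioc x r₀, HasDerivAt ψ (Phi n k R r (ψ r)) r :=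
    fun r hr => hode r ⟨hr.1, hr.2.trans_lt hr₀y⟩
  have hψr₀ : blowUpThreshold n R r₀ < ψ r₀ := by
    rcases hcase with ⟨⟨-, hr₀b⟩, hψr₀⟩ | ⟨⟨hbr₀, -⟩, hψr₀⟩
    · rwa [blowUpThreshold, if_neg hr₀b.not_gt]
    · rwa [blowUpThreshold, if_pos hbr₀]
  have hanti := antitoneOn_of_blowUpThreshold_lt hn hR1 hR2 hx hr₀1 hψ hψr₀
  have hx1 : -1 < x := hx.lt_of_ne fun hx_eq => by
    subst hx_eq
    exact (apply_nonpos_of_antitoneOn_Ioc_neg_one hn hk hR1 hR2 hxr₀ hψ hanti).not_gt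
      ((blowUpThreshold_nonneg hn hR1 hR2 hr₀1).trans_lt hψr₀)
  have hub : ¬ BddAbove (ψ '' Ioo x r₀) := by
    intro hbdd
    have hlim := (hanti.mono Ioo_subset_Ioc_self).tendsto_nhdsWithin_Ioo_right
      (nonempty_Ioo.2 hxr₀) hbdd
    obtain ⟨x', hx', g, hgψ, hg⟩ := exists_hasDerivAt_extension_left
      (contDiffAt_Phi hk hx1 (hxr₀.trans hr₀1) _) hode hlim
    exact hmax x' y g hx'.le le_rfl
      (ssubset_of_subset_not_subset (Ioo_subset_Ioo_left hx'.le)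
        fun h => (h ⟨hx', hxr₀.trans hr₀y⟩).1.false) hgψ hg
  exact ⟨x, ⟨hx1, hxr₀⟩, (hanti.mono Ioo_subset_Ioc_self).tendsto_nhdsGT_atTop hub⟩

theorem stmt_8 (n k : ℕ) (hn : 2 ≤ n) (hk : 1 ≤ k) (R : ℝ) (hR1 : -1 < R) (hR2 : R < 1)
    (x y : ℝ) (hx : -1 ≤ x) (hxy : x < y) (hy : y ≤ 1) (ψ : ℝ → ℝ)
    (hode : ∀ r ∈ Set.Ioo x y, HasDerivAt ψ (Phi n k R r (ψ r)) r)
    (hmax : ∀ x' y' : ℝ, ∀ g : ℝ → ℝ, x' ≤ x → y ≤ y' → Set.Ioo x y ⊂ Set.Ioo x' y' →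
      Set.EqOn g ψ (Set.Ioo x y) →
      ¬ (∀ r ∈ Set.Ioo x' y', HasDerivAt g (Phi n k R r (g r)) r))
    (r₀ : ℝ) (hr₀ : r₀ ∈ Set.Ioo x y)
    (hcase : (r₀ ∈ Set.Ioc (-1 : ℝ) (rootB n R) ∧ 0 < ψ r₀) ∨
      (r₀ ∈ Set.Ioo (rootB n R) 1 ∧ eta2 n R r₀ < ψ r₀)) :
    ∃ r₁ ∈ Set.Ioo (-1 : ℝ) r₀,
      Filter.Tendsto ψ (nhdsWithin r₁ (Set.Ioi r₁)) Filter.atTop :=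
  stmt_8_general n k hn hk R hR1 hR2 x y hx hy ψ hode hmax r₀ hr₀ hcase
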